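/- arXiv:1201.3795 — 2 statements merged into one kernel-verified Lean document; each statement's English description precedes it below -/
import Mathlib

section
/- Fix c > 0 and an integer k ≥ 1 with c < n, let p = c/n, and let H be an (n,k,p) Newman–Watts small world. For v ∈ [n] and a positive integer j, let B_{j,v} be the collection of all subsets S ⊆ [n] with v ∈ S, |S| = j, and H[S] connected, and let B_j be the union of the B_{j,v} over v ∈ [n] (i.e., all connected sets of size j). Then E[|B_{j,v}|] ≤ (4(c+2k))^j for every v, and E[|B_j|] ≤ n·(4(c+2k))^j. -/
open scoped Classical

noncomputable section

/-- The `(n,k)`-ring adjacency on `Fin n` (with mod-`n` arithmetic):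
`x` and `y` are adjacent iff `(y-x) mod n ∈ {1,…,k}` (equivalently, in `{-k,…,-1}`). -/
def ringAdj (n k : ℕ) (x y : Fin n) : Prop :=
  x ≠ y ∧ ((y - x).val ≤ k ∨ (x - y).val ≤ k)

/-- The Newman–Watts small world determined by the Bernoulli coordinates `η`:
the `(n,k)`-ring together with all pairs `{x,y}` with `η s(x,y) = true`. -/
def nwGraph (n k : ℕ) (η : Sym2 (Fin n) → Bool) : SimpleGraph (Fin n) where
  Adj x y := x ≠ y ∧ ((y - x).val ≤ k ∨ (x - y).val ≤ k ∨ η s(x, y) = true)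
  symm := by
    constructor
    rintro x y ⟨hne, h⟩
    refine ⟨hne.symm, ?_⟩
    rcases h with h | h | h
    · exact Or.inr (Or.inl h)
    · exact Or.inl h
    · exact Or.inr (Or.inr (by rwa [Sym2.eq_swap]))
  loopless := by constructor; rintro x ⟨hne, -⟩; exact hne rfl

/-- Product-Bernoulli(`p`) weight of an outcome `η`. -/
def nwWeight (n : ℕ) (p : ℝ) (η : Sym2 (Fin n) → Bool) : ℝ :=
  ∏ e : Sym2 (Fin n), if η e then p else 1 - p

/-- Probability of an event under the product Bernoulli(`p`) measure. -/
def nwPr (n : ℕ) (p : ℝ) (A : (Sym2 (Fin n) → Bool) → Prop) : ℝ :=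
  ∑ η : Sym2 (Fin n) → Bool, if A η then nwWeight n p η else 0

/-- Expectation under the product Bernoulli(`p`) measure. -/
def nwExp (n : ℕ) (p : ℝ) (X : (Sym2 (Fin n) → Bool) → ℝ) : ℝ :=
  ∑ η : Sym2 (Fin n) → Bool, nwWeight n p η * X η

variable {V : Type*} [Fintype V] [DecidableEq V]

/-- Degree of `v` in `G`. -/
def gdeg (G : SimpleGraph V) (v : V) : ℕ :=
  (Finset.univ.filter fun u => G.Adj v u).card

/-- Number of edges of `G`. -/
def edgeCount (G : SimpleGraph V) : ℕ := (∑ v, gdeg G v) / 2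

/-- `e(S,Sᶜ)`: number of edges with one endpoint in `S`, the other outside. -/
def eCross (G : SimpleGraph V) (S : Finset V) : ℕ :=
  ∑ x ∈ S, ∑ y ∈ Sᶜ, if G.Adj x y then 1 else 0

/-- `e(S) = Σ_{v∈S} deg v`. -/
def eTot (G : SimpleGraph V) (S : Finset V) : ℕ := ∑ x ∈ S, gdeg G x

/-- `e(S,S)`: number of edges with both endpoints in `S`. -/
def eIn (G : SimpleGraph V) (S : Finset V) : ℕ :=
  (∑ x ∈ S, ∑ y ∈ S, if G.Adj x y then 1 else 0) / 2

/-- `S` is connected if the induced subgraph `G[S]` is connected. -/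
def connectedSet (G : SimpleGraph V) (S : Finset V) : Prop :=
  (G.induce (S : Set V)).Connected

/-- One step of the lazy simple random walk applied to a distribution. -/
def lazyStep (G : SimpleGraph V) (μ : V → ℝ) : V → ℝ := fun v =>
  μ v / 2 + ∑ u ∈ Finset.univ.filter (fun u => G.Adj u v), μ u / (2 * gdeg G u)

/-- Distribution of the lazy simple random walk after `t` steps, started at `x`. -/
def walkDist (G : SimpleGraph V) (x : V) : ℕ → V → ℝ
  | 0 => fun v => if v = x then 1 else 0
  | (t + 1) => lazyStep G (walkDist G x t)

/-- Stationary distribution `π(v) = deg v / (2|E|)`. -/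
def statDist (G : SimpleGraph V) (v : V) : ℝ := gdeg G v / (2 * edgeCount G)

/-- Total variation distance. -/
def tvDist (μ ν : V → ℝ) : ℝ := (∑ v, |μ v - ν v|) / 2

/-- Mixing time `max_x min {t : ‖μ_{t,x} − π‖_TV ≤ 1/4}`. -/
def mixingTime (G : SimpleGraph V) : ℕ :=
  Finset.univ.sup fun x => sInf {t : ℕ | tvDist (walkDist G x t) (statDist G) ≤ 1 / 4}
/-!
A connected set `S ∋ v` with `m + 1` vertices is the vertex set of a breadth-first spanning tree,
encoded by an injective labelling `ℓ` of `{0, …, m}` with `ℓ 0 = v` and a monotone parent map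
`par` with `par i ≤ i`; there are at most `4 ^ m` such parent maps. The `m` tree edges are
distinct, hence independent, and each is present with probability at most `1` if it is a ring
edge and at most `p` otherwise. Summing these weights over the labels leaf by leaf gives at most
`(2k + np) ^ m = (2k + c) ^ m` for each parent map, so `E|B_{j,v}| ≤ (4(c + 2k)) ^ (j - 1)`;
summing over `v` bounds `E|B_j|`.
-/

open Finset
open Finset

section BernoulliProduct

variable {n : ℕ} {p : ℝ}

lemma nwWeight_nonneg (hp₀ : 0 ≤ p) (hp₁ : p ≤ 1) (η : Sym2 (Fin n) → Bool) :
    0 ≤ nwWeight n p η :=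
  prod_nonneg fun e _ => by split <;> linarith

lemma nwExp_mono (hp₀ : 0 ≤ p) (hp₁ : p ≤ 1) {X Y : (Sym2 (Fin n) → Bool) → ℝ}
    (h : ∀ η, X η ≤ Y η) : nwExp n p X ≤ nwExp n p Y :=
  sum_le_sum fun η _ => mul_le_mul_of_nonneg_left (h η) (nwWeight_nonneg hp₀ hp₁ η)

lemma nwExp_sum {ι : Type*} (s : Finset ι) (X : ι → (Sym2 (Fin n) → Bool) → ℝ) :
    nwExp n p (fun η => ∑ i ∈ s, X i η) = ∑ i ∈ s, nwExp n p (X i) := by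
  simp only [nwExp, mul_sum]
  exact sum_comm

lemma nwExp_card_filter {ι : Type*} (s : Finset ι) (A : ι → (Sym2 (Fin n) → Bool) → Prop)
    [∀ η, DecidablePred fun i => A i η] :
    nwExp n p (fun η => (#{i ∈ s | A i η} : ℝ)) = ∑ i ∈ s, nwPr n p (A i) := by
  simp only [card_filter, Nat.cast_sum, Nat.cast_ite, Nat.cast_one, Nat.cast_zero]
  rw [nwExp_sum]
  refine sum_congr rfl fun i _ => sum_congr rfl fun η _ => ?_
  rw [mul_ite, mul_one, mul_zero]
  congr

lemma nwPr_mono (hp₀ : 0 ≤ p) (hp₁ : p ≤ 1) {A B : (Sym2 (Fin n) → Bool) → Prop}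
    (h : ∀ η, A η → B η) : nwPr n p A ≤ nwPr n p B := by
  refine sum_le_sum fun η _ => ?_
  by_cases hA : A η
  · rw [if_pos hA, if_pos (h η hA)]
  · rw [if_neg hA]
    split_ifs
    exacts [nwWeight_nonneg hp₀ hp₁ η, le_rfl]

lemma nwPr_forall_mem (F : Finset (Sym2 (Fin n))) :
    nwPr n p (fun η => ∀ e ∈ F, η e = true) = p ^ #F := by
  set g : Sym2 (Fin n) → Bool → ℝ := fun e b => if b then p else if e ∈ F then 0 else 1 - p
  have hpointwise : ∀ η : Sym2 (Fin n) → Bool,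
      (if ∀ e ∈ F, η e = true then nwWeight n p η else 0) = ∏ e, g e (η e) := by
    intro η
    split_ifs with hF
    · refine prod_congr rfl fun e _ => ?_
      by_cases heF : e ∈ F
      · simp [g, hF e heF]
      · cases η e <;> simp [g, heF]
    · push Not at hF
      obtain ⟨e, heF, he⟩ := hF
      exact (prod_eq_zero (mem_univ e) (by simp [g, heF, he])).symm
  calc nwPr n p (fun η => ∀ e ∈ F, η e = true) = ∑ η : Sym2 (Fin n) → Bool, ∏ e, g e (η e) :=
        sum_congr rfl fun η _ => by convert hpointwise η
    _ = ∏ e, (if e ∈ F then p else 1) := by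
        rw [← Fintype.prod_sum]
        refine prod_congr rfl fun e _ => ?_
        by_cases heF : e ∈ F <;> simp [g, heF]
    _ = p ^ #F := by rw [prod_ite_mem, univ_inter, prod_const]

end BernoulliProduct

section RingWeights

variable {n k : ℕ} {p : ℝ}

def edgeWeight (n k : ℕ) (p : ℝ) (x y : Fin n) : ℝ := if ringAdj n k x y then 1 else p

lemma edgeWeight_nonneg (hp₀ : 0 ≤ p) (x y : Fin n) : 0 ≤ edgeWeight n k p x y := by
  unfold edgeWeight; split_ifs <;> linarith

lemma ringAdj_or_of_nwGraph_adj {η : Sym2 (Fin n) → Bool} {x y : Fin n}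
    (h : (nwGraph n k η).Adj x y) : ringAdj n k x y ∨ η s(x, y) = true := by
  obtain ⟨hne, h | h | h⟩ := h
  exacts [Or.inl ⟨hne, Or.inl h⟩, Or.inl ⟨hne, Or.inr h⟩, Or.inr h]

open Fin.NatCast in
lemma card_ringAdj_le (x : Fin n) : #{y | ringAdj n k x y} ≤ 2 * k := by
  have : NeZero n := ⟨x.pos.ne'⟩
  have hsub : ({y | ringAdj n k x y} : Finset (Fin n)) ⊆
      (Icc 1 k).image (fun d : ℕ => x + (d : Fin n)) ∪
        (Icc 1 k).image (fun d : ℕ => x - (d : Fin n)) := by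
    intro y hy
    obtain ⟨hne, h | h⟩ := (mem_filter.mp hy).2
    · refine mem_union_left _ (mem_image.mpr ⟨(y - x).val, mem_Icc.mpr ⟨?_, h⟩, by simp⟩)
      exact Nat.one_le_iff_ne_zero.mpr fun h0 => hne (sub_eq_zero.mp (Fin.ext h0)).symm
    · refine mem_union_right _ (mem_image.mpr ⟨(x - y).val, mem_Icc.mpr ⟨?_, h⟩, by simp⟩)
      exact Nat.one_le_iff_ne_zero.mpr fun h0 => hne (sub_eq_zero.mp (Fin.ext h0))
  calc #{y | ringAdj n k x y} ≤ #(Icc 1 k) + #(Icc 1 k) :=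
        (card_le_card hsub).trans <|
          (card_union_le _ _).trans (add_le_add card_image_le card_image_le)
    _ = 2 * k := by rw [Nat.card_Icc]; omega

lemma sum_edgeWeight_le (hp₀ : 0 ≤ p) (x : Fin n) :
    ∑ y, edgeWeight n k p x y ≤ 2 * k + n * p := by
  calc ∑ y, edgeWeight n k p x y ≤ ∑ y, ((if ringAdj n k x y then 1 else 0) + p) :=
        sum_le_sum fun y _ => by unfold edgeWeight; split_ifs <;> linarith
    _ = #{y | ringAdj n k x y} + n * p := by
        rw [sum_add_distrib, sum_boole, sum_const, card_univ, Fintype.card_fin, nsmul_eq_mul]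
    _ ≤ 2 * k + n * p := by
        gcongr
        exact_mod_cast card_ringAdj_le x

lemma nwPr_forall_adj_le (hp₀ : 0 ≤ p) (hp₁ : p ≤ 1) {m : ℕ} (a b : Fin m → Fin n)
    (hab : Function.Injective fun i => s(a i, b i)) :
    nwPr n p (fun η => ∀ i, (nwGraph n k η).Adj (a i) (b i)) ≤
      ∏ i, edgeWeight n k p (a i) (b i) := by
  set I : Finset (Fin m) := {i | ¬ ringAdj n k (a i) (b i)}
  set F := I.image fun i => s(a i, b i)
  have hF : ∀ η, (∀ i, (nwGraph n k η).Adj (a i) (b i)) → ∀ e ∈ F, η e = true := by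
    intro η hadj e he
    obtain ⟨i, hi, rfl⟩ := mem_image.mp he
    exact (ringAdj_or_of_nwGraph_adj (hadj i)).resolve_left (mem_filter.mp hi).2
  calc nwPr n p (fun η => ∀ i, (nwGraph n k η).Adj (a i) (b i))
      ≤ nwPr n p (fun η => ∀ e ∈ F, η e = true) := nwPr_mono hp₀ hp₁ hF
    _ = ∏ i, edgeWeight n k p (a i) (b i) := by
        simp only [edgeWeight]
        rw [nwPr_forall_mem, card_image_of_injective _ hab, prod_ite, prod_const_one, one_mul,
          prod_const]

end RingWeights

section TreeSums

variable {α : Type*} [Fintype α] [DecidableEq α]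

lemma sum_prod_tree_le {q : α → α → ℝ} {D : ℝ} (hq : ∀ x y, 0 ≤ q x y)
    (hD : ∀ x, ∑ y, q x y ≤ D) (v : α) {m : ℕ} (par : Fin m → Fin (m + 1))
    (hpar : ∀ i, par i ≤ i.castSucc) :
    ∑ ℓ : Fin (m + 1) → α, (if ℓ 0 = v then ∏ i, q (ℓ (par i)) (ℓ i.succ) else 0) ≤ D ^ m := by
  induction m with
  | zero =>
    rw [← Fintype.sum_equiv (Equiv.funUnique (Fin 1) α).symm (fun y => if y = v then 1 else 0)
      _ fun y => by simp]
    simp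
  | succ m ih =>
    -- parents precede their children, so the last vertex is a leaf and its label is summed first
    have hD₀ : 0 ≤ D := (sum_nonneg fun y _ => hq v y).trans (hD v)
    have hne : ∀ i : Fin (m + 1), par i ≠ Fin.last (m + 1) := fun i h =>
      (Fin.castSucc_lt_last i).not_ge (h ▸ hpar i)
    set par' : Fin m → Fin (m + 1) := fun i => (par i.castSucc).castPred (hne _)
    set P : Fin (m + 1) := (par (Fin.last m)).castPred (hne _)
    have hpar' : ∀ i, par' i ≤ i.castSucc := fun i => by
      rw [← Fin.castSucc_le_castSucc_iff, Fin.castSucc_castPred]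
      exact hpar i.castSucc
    have hsnoc : ∀ (ℓ : Fin (m + 1) → α) (y : α),
        ∏ i, q (Fin.snoc (α := fun _ => α) ℓ y (par i)) (Fin.snoc (α := fun _ => α) ℓ y i.succ) =
          (∏ i, q (ℓ (par' i)) (ℓ i.succ)) * q (ℓ P) y := by
      intro ℓ y
      rw [Fin.prod_univ_castSucc]
      congr 1
      · refine prod_congr rfl fun i _ => ?_
        rw [← Fin.castSucc_castPred (par i.castSucc) (hne _), Fin.snoc_castSucc,
          Fin.succ_castSucc, Fin.snoc_castSucc]
      · rw [← Fin.castSucc_castPred (par (Fin.last m)) (hne _), Fin.snoc_castSucc, Fin.succ_last,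
          Fin.snoc_last]
    calc ∑ ℓ : Fin (m + 2) → α, (if ℓ 0 = v then ∏ i, q (ℓ (par i)) (ℓ i.succ) else 0)
        = ∑ ℓ : Fin (m + 1) → α, ∑ y,
            (if ℓ 0 = v then ∏ i, q (ℓ (par' i)) (ℓ i.succ) else 0) * q (ℓ P) y := by
          rw [← Fintype.sum_equiv (Fin.snocEquiv fun _ => α) _ _ fun _ => rfl,
            Fintype.sum_prod_type, sum_comm]
          refine sum_congr rfl fun ℓ _ => sum_congr rfl fun y _ => ?_
          simp only [Fin.snocEquiv_apply, hsnoc, ite_mul, zero_mul]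
          rfl
      _ ≤ ∑ ℓ : Fin (m + 1) → α,
            (if ℓ 0 = v then ∏ i, q (ℓ (par' i)) (ℓ i.succ) else 0) * D := by
          refine sum_le_sum fun ℓ _ => ?_
          rw [← mul_sum]
          exact mul_le_mul_of_nonneg_left (hD _)
            (by split_ifs; exacts [prod_nonneg fun i _ => hq _ _, le_rfl])
      _ ≤ D ^ (m + 1) := by
          rw [← sum_mul, pow_succ]
          exact mul_le_mul_of_nonneg_right (ih par' hpar') hD₀

end TreeSums

section ParentMaps

def bfsParentMaps (m : ℕ) : Finset (Fin m → Fin (m + 1)) :=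
  {par | Monotone par ∧ ∀ i, par i ≤ i.castSucc}

/-- A monotone `par` is recorded by the range of the strictly monotone `i ↦ par i + i`. -/
lemma card_bfsParentMaps_le (m : ℕ) : #(bfsParentMaps m) ≤ 4 ^ m := by
  let shift (par : Fin m → Fin (m + 1)) (i : Fin m) : Fin (2 * m) :=
    ⟨par i + i, by have := par i |>.isLt; have := i.isLt; omega⟩
  have hshift : ∀ par ∈ bfsParentMaps m, StrictMono (shift par) := fun par hpar i j hij => by
    have : par i ≤ par j := (mem_filter.mp hpar).2.1 hij.le
    simp only [shift, Fin.le_def, Fin.lt_def] at this hij ⊢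
    omega
  calc #(bfsParentMaps m) ≤ #(univ : Finset (Finset (Fin (2 * m)))) := by
        refine card_le_card_of_injOn (fun par => univ.image (shift par)) (fun _ _ => mem_univ _) ?_
        intro par hpar par' hpar' h
        have hrange : Set.range (shift par) = Set.range (shift par') := by
          simpa using congrArg (fun s : Finset (Fin (2 * m)) => (s : Set (Fin (2 * m)))) h
        funext i
        have := congrArg Fin.val (congrFun ((hshift par hpar).range_inj (hshift par' hpar')
          |>.mp hrange) i)
        simp only [shift] at this
        exact Fin.ext (by omega)
    _ = 4 ^ m := by simp [pow_mul]

lemma injective_treeEdges {α : Type*} {m : ℕ} {par : Fin m → Fin (m + 1)}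
    (hpar : ∀ i, par i ≤ i.castSucc) {ℓ : Fin (m + 1) → α} (hℓ : Function.Injective ℓ) :
    Function.Injective fun i => s(ℓ (par i), ℓ i.succ) := by
  intro i j hij
  rcases Sym2.eq_iff.mp hij with ⟨-, h⟩ | ⟨h₁, h₂⟩
  · exact Fin.succ_injective _ (hℓ h)
  · have h₁ := congrArg Fin.val (hℓ h₁)
    have h₂ := congrArg Fin.val (hℓ h₂)
    have hi := Fin.le_def.mp (hpar i)
    have hj := Fin.le_def.mp (hpar j)
    simp only [Fin.val_succ, Fin.val_castSucc] at h₁ h₂ hi hj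
    omega

end ParentMaps

section BreadthFirst

variable {α : Type*} {G : SimpleGraph α}

lemma Fin.monotone_snoc {β : Type*} [Preorder β] {r : ℕ} {f : Fin r → β} {x : β}
    (hf : Monotone f) (hx : ∀ i, f i ≤ x) : Monotone (Fin.snoc f x : Fin (r + 1) → β) := by
  intro i j hij
  induction j using Fin.lastCases with
  | last => induction i using Fin.lastCases <;> simp [hx]
  | cast j =>
    induction i using Fin.lastCases with
    | last => exact absurd hij (Fin.castSucc_lt_last j).not_ge
    | cast i => simpa using hf (Fin.castSucc_le_castSucc_iff.mp hij)

lemma exists_adj_notMem_of_connected_induce {S A : Set α} (hS : (G.induce S).Connected)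
    {a b : α} (ha : a ∈ S) (hb : b ∈ S) (haA : a ∈ A) (hbA : b ∉ A) :
    ∃ x ∈ A, ∃ y ∈ S, y ∉ A ∧ G.Adj x y := by
  obtain ⟨w⟩ := hS.preconnected ⟨a, ha⟩ ⟨b, hb⟩
  obtain ⟨d, -, hfst, hsnd⟩ := w.exists_boundary_dart {z : S | (z : α) ∈ A} haA hbA
  exact ⟨d.fst, hfst, d.snd, d.snd.2, hsnd, d.adj⟩

/-- The last field is the breadth-first invariant: a vertex of `S` not listed yet that is
adjacent to `ℓ t` can still receive the parent `t` without breaking monotonicity. -/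
structure IsBFSPrefix (G : SimpleGraph α) (S : Finset α) (v : α) {r : ℕ}
    (par : Fin r → Fin (r + 1)) (ℓ : Fin (r + 1) → α) : Prop where
  par_mem : par ∈ bfsParentMaps r
  injective : Function.Injective ℓ
  mem : ∀ i, ℓ i ∈ S
  zero : ℓ 0 = v
  adj : ∀ i, G.Adj (ℓ (par i)) (ℓ i.succ)
  frontier : ∀ u ∈ S, u ∉ Set.range ℓ → ∀ t i, G.Adj (ℓ t) u → par i ≤ t

lemma isBFSPrefix_zero {S : Finset α} {v : α} (hv : v ∈ S) :
    IsBFSPrefix G S v Fin.elim0 fun _ => v where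
  par_mem := mem_filter.mpr ⟨mem_univ _, fun i => i.elim0, fun i => i.elim0⟩
  injective i j _ := Fin.ext (by omega)
  mem _ := hv
  zero := rfl
  adj := Fin.elim0
  frontier _ _ _ _ i := i.elim0

/-- Attach the next vertex to the least listed vertex that still has an unlisted neighbour. -/
lemma IsBFSPrefix.extend {S : Finset α} {v : α} {r : ℕ} {par : Fin r → Fin (r + 1)}
    {ℓ : Fin (r + 1) → α} (h : IsBFSPrefix G S v par ℓ)
    (hS : (G.induce (S : Set α)).Connected) (hr : r + 1 < #S) :
    ∃ par' ℓ', IsBFSPrefix G S v (r := r + 1) par' ℓ' := by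
  obtain ⟨y, hyS, hyℓ⟩ : ∃ y ∈ S, y ∉ Set.range ℓ := by
    by_contra! hall
    have : S ⊆ univ.image ℓ := fun y hy => by simpa using hall y hy
    have := (card_le_card this).trans card_image_le
    rw [card_univ, Fintype.card_fin] at this
    omega
  obtain ⟨-, ⟨t, rfl⟩, u, huS, huℓ, hadj⟩ := exists_adj_notMem_of_connected_induce hS
    (h.mem 0) hyS (Set.mem_range_self 0) hyℓ
  obtain ⟨t₀, ⟨u₀, hu₀S, hu₀ℓ, hadj₀⟩, hmin⟩ := (wellFounded_lt (α := Fin (r + 1))).has_min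
    {t | ∃ u ∈ S, u ∉ Set.range ℓ ∧ G.Adj (ℓ t) u} ⟨t, u, huS, huℓ, hadj⟩
  have hpar := mem_filter.mp h.par_mem
  refine ⟨Fin.snoc (fun i => (par i).castSucc) t₀.castSucc, Fin.snoc ℓ u₀, ⟨?_, ?_, ?_, ?_, ?_, ?_⟩⟩
  · refine mem_filter.mpr ⟨mem_univ _, Fin.monotone_snoc ?_ ?_, fun i => ?_⟩
    · exact fun i j hij => Fin.castSucc_le_castSucc_iff.mpr (hpar.2.1 hij)
    · exact fun i => Fin.castSucc_le_castSucc_iff.mpr (h.frontier u₀ hu₀S hu₀ℓ t₀ i hadj₀)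
    · induction i using Fin.lastCases with
      | last => simpa using Fin.le_last t₀
      | cast i => simpa using hpar.2.2 i
  · exact Fin.snoc_injective_of_injective h.injective hu₀ℓ
  · intro i
    induction i using Fin.lastCases <;> simp [hu₀S, h.mem]
  · simpa using h.zero
  · intro i
    induction i using Fin.lastCases with
    | last => simpa using hadj₀
    | cast i => simpa only [Fin.snoc_castSucc, Fin.succ_castSucc] using h.adj i
  · intro u hu huℓ' t i hadj
    have huℓ : u ∉ Set.range ℓ := by simp_all
    induction t using Fin.lastCases with
    | last => exact Fin.le_last _
    | cast t =>
      rw [Fin.snoc_castSucc] at hadj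
      have ht₀ : t₀ ≤ t := not_lt.mp (hmin t ⟨u, hu, huℓ, hadj⟩)
      induction i using Fin.lastCases <;> simp [ht₀, h.frontier u hu huℓ t _ hadj]

lemma exists_isBFSPrefix {S : Finset α} {v : α} (hS : (G.induce (S : Set α)).Connected)
    (hv : v ∈ S) {r : ℕ} (hr : r < #S) : ∃ par ℓ, IsBFSPrefix G S v (r := r) par ℓ := by
  induction r with
  | zero => exact ⟨_, _, isBFSPrefix_zero hv⟩
  | succ r ih =>
    obtain ⟨par, ℓ, h⟩ := ih (by omega)
    exact h.extend hS hr

end BreadthFirst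

section ConnectedSets

def bfsCodes {α : Type*} [Fintype α] [DecidableEq α] (v : α) (m : ℕ) :
    Finset ((Fin m → Fin (m + 1)) × (Fin (m + 1) → α)) :=
  bfsParentMaps m ×ˢ ({ℓ | Function.Injective ℓ ∧ ℓ 0 = v} : Finset _)

variable {α : Type*} [Fintype α] [DecidableEq α]

lemma card_filter_le_sum_card_filter_mem (P : Finset α → Prop) [DecidablePred P]
    (hP : ∀ S, P S → S.Nonempty) :
    #{S | P S} ≤ ∑ v, #{S | v ∈ S ∧ P S} := by
  refine (card_le_card fun S hS => ?_).trans card_biUnion_le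
  obtain ⟨v, hv⟩ := hP S (mem_filter.mp hS).2
  exact mem_biUnion.mpr ⟨v, mem_univ v, mem_filter.mpr ⟨mem_univ S, hv, (mem_filter.mp hS).2⟩⟩

/-- Every connected set is the vertex set of the tree of some breadth-first code. -/
lemma card_connected_le_card_bfsCodes (G : SimpleGraph α) (v : α) (m : ℕ) :
    #{S : Finset α | v ∈ S ∧ #S = m + 1 ∧ connectedSet G S} ≤
      #{w ∈ bfsCodes v m | ∀ i, G.Adj (w.2 (w.1 i)) (w.2 i.succ)} := by
  refine (card_le_card fun S hS => ?_).trans (card_image_le (f := fun w => univ.image w.2))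
  obtain ⟨-, hv, hcard, hconn⟩ := mem_filter.mp hS
  obtain ⟨par, ℓ, h⟩ := exists_isBFSPrefix hconn hv (r := m) (by omega)
  refine mem_image.mpr ⟨(par, ℓ), ?_, ?_⟩
  · simp only [bfsCodes, mem_filter, mem_product, mem_univ, true_and]
    exact ⟨⟨h.par_mem, h.injective, h.zero⟩, h.adj⟩
  · refine eq_of_subset_of_card_le (fun x hx => ?_) ?_
    · obtain ⟨i, -, rfl⟩ := mem_image.mp hx
      exact h.mem i
    · rw [card_image_of_injective _ h.injective, card_univ, Fintype.card_fin, hcard]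

end ConnectedSets

lemma nwExp_card_connected_mem_succ_le {n k : ℕ} {p : ℝ} (hp₀ : 0 ≤ p) (hp₁ : p ≤ 1) (v : Fin n)
    (m : ℕ) :
    nwExp n p (fun η => (#{S | v ∈ S ∧ #S = m + 1 ∧ connectedSet (nwGraph n k η) S} : ℝ)) ≤
      4 ^ m * (2 * k + n * p) ^ m := by
  set weight : (Fin m → Fin (m + 1)) → (Fin (m + 1) → Fin n) → ℝ :=
    fun par ℓ => ∏ i, edgeWeight n k p (ℓ (par i)) (ℓ i.succ)
  calc nwExp n p (fun η => (#{S | v ∈ S ∧ #S = m + 1 ∧ connectedSet (nwGraph n k η) S} : ℝ))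
      ≤ nwExp n p (fun η =>
          (#{w ∈ bfsCodes v m | ∀ i, (nwGraph n k η).Adj (w.2 (w.1 i)) (w.2 i.succ)} : ℝ)) :=
        nwExp_mono hp₀ hp₁ fun η => by exact_mod_cast card_connected_le_card_bfsCodes _ v m
    _ = ∑ w ∈ bfsCodes v m,
          nwPr n p (fun η => ∀ i, (nwGraph n k η).Adj (w.2 (w.1 i)) (w.2 i.succ)) :=
        nwExp_card_filter _ _
    _ ≤ ∑ w ∈ bfsCodes v m, weight w.1 w.2 := by
        refine sum_le_sum fun w hw => ?_
        simp only [bfsCodes, mem_product, mem_filter] at hw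
        exact nwPr_forall_adj_le hp₀ hp₁ _ _ (injective_treeEdges (mem_filter.mp hw.1).2.2 hw.2.2.1)
    _ ≤ ∑ par ∈ bfsParentMaps m, ∑ ℓ : Fin (m + 1) → Fin n,
          (if ℓ 0 = v then weight par ℓ else 0) := by
        rw [bfsCodes, sum_product]
        refine sum_le_sum fun par _ => ?_
        rw [← sum_filter]
        refine sum_le_sum_of_subset_of_nonneg
          (fun ℓ hℓ => mem_filter.mpr ⟨mem_univ _, (mem_filter.mp hℓ).2.2⟩) ?_
        exact fun ℓ _ _ => prod_nonneg fun i _ => edgeWeight_nonneg hp₀ _ _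
    _ ≤ ∑ par ∈ bfsParentMaps m, (2 * k + n * p) ^ m :=
        sum_le_sum fun par hpar => sum_prod_tree_le (fun _ _ => edgeWeight_nonneg hp₀ _ _)
          (sum_edgeWeight_le hp₀) v par (mem_filter.mp hpar).2.2
    _ ≤ 4 ^ m * (2 * k + n * p) ^ m := by
        rw [sum_const, nsmul_eq_mul]
        gcongr
        exact_mod_cast card_bfsParentMaps_le m

lemma nwExp_card_connected_mem_le {c : ℝ} (hc : 0 < c) {k : ℕ} (hk : 1 ≤ k) {n : ℕ}
    (hn : c < n) (v : Fin n) (j : ℕ) :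
    nwExp n (c / n) (fun η => (#{S | v ∈ S ∧ #S = j ∧ connectedSet (nwGraph n k η) S} : ℝ)) ≤
      (4 * (c + 2 * k)) ^ j := by
  have hn₀ : (0 : ℝ) < n := hc.trans hn
  rcases j with _ | m
  · have hempty : ∀ η, ({S | v ∈ S ∧ #S = 0 ∧ connectedSet (nwGraph n k η) S} :
        Finset (Finset (Fin n))) = ∅ := fun η =>
      filter_eq_empty_iff.mpr fun S _ ⟨hv, hS, _⟩ => by simp_all
    simp only [nwExp, hempty, card_empty, Nat.cast_zero, mul_zero, sum_const_zero]
    exact zero_le_one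
  calc _ ≤ 4 ^ m * (2 * k + n * (c / n)) ^ m :=
        nwExp_card_connected_mem_succ_le (by positivity) ((div_le_one hn₀).mpr hn.le) v m
    _ = (4 * (c + 2 * k)) ^ m := by rw [mul_div_cancel₀ c hn₀.ne', ← mul_pow, add_comm]
    _ ≤ (4 * (c + 2 * k)) ^ (m + 1) :=
        pow_le_pow_right₀ (by have : (1 : ℝ) ≤ k := Nat.one_le_cast.mpr hk; linarith) m.le_succ

theorem expected_number_connected_subsets_general (c : ℝ) (hc : 0 < c) (k : ℕ) (hk : 1 ≤ k)
    (n : ℕ) (hn : c < n) (j : ℕ) :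
    (∀ v : Fin n,
      nwExp n (c / n) (fun η =>
        ((Finset.univ.filter fun S : Finset (Fin n) =>
          v ∈ S ∧ S.card = j ∧ connectedSet (nwGraph n k η) S).card : ℝ)) ≤
        (4 * (c + 2 * k)) ^ j) ∧
    nwExp n (c / n) (fun η =>
      ((Finset.univ.filter fun S : Finset (Fin n) =>
        S.card = j ∧ connectedSet (nwGraph n k η) S).card : ℝ)) ≤
      n * (4 * (c + 2 * k)) ^ j := by
  have hn₀ : (0 : ℝ) < n := hc.trans hn
  have hvertex := nwExp_card_connected_mem_le hc hk hn (k := k)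
  refine ⟨fun v => hvertex v j, ?_⟩
  calc _ ≤ nwExp n (c / n) (fun η => ∑ v : Fin n,
          (#{S | v ∈ S ∧ #S = j ∧ connectedSet (nwGraph n k η) S} : ℝ)) :=
        nwExp_mono (by positivity) ((div_le_one hn₀).mpr hn.le) fun η => by
          exact_mod_cast card_filter_le_sum_card_filter_mem
            (fun S => #S = j ∧ connectedSet (nwGraph n k η) S) fun S hS =>
              Finset.coe_nonempty.mp (Set.nonempty_coe_sort.mp hS.2.nonempty)
    _ ≤ ∑ v : Fin n, (4 * (c + 2 * k)) ^ j := by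
        rw [nwExp_sum]
        exact sum_le_sum fun v _ => hvertex v j
    _ = n * (4 * (c + 2 * k)) ^ j := by simp

/-- **Proposition (counting connected subgraphs).** Let `p = c/n` (with `0 < c < n`) and let `H`
be an `(n,k,p)` Newman–Watts small world. For any positive integer `j` and any vertex `v`,
the expected number of connected sets of size `j` containing `v` is at most `(4(c+2k))^j`, and
the expected number of connected sets of size `j` is at most `n·(4(c+2k))^j`. -/
theorem expected_number_connected_subsets (c : ℝ) (hc : 0 < c) (k : ℕ) (hk : 1 ≤ k)
    (n : ℕ) (hn : c < n) (j : ℕ) (hj : 1 ≤ j) :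
    (∀ v : Fin n,
      nwExp n (c / n) (fun η =>
        ((Finset.univ.filter fun S : Finset (Fin n) =>
          v ∈ S ∧ S.card = j ∧ connectedSet (nwGraph n k η) S).card : ℝ)) ≤
        (4 * (c + 2 * k)) ^ j) ∧
    nwExp n (c / n) (fun η =>
      ((Finset.univ.filter fun S : Finset (Fin n) =>
        S.card = j ∧ connectedSet (nwGraph n k η) S).card : ℝ)) ≤
      n * (4 * (c + 2 * k)) ^ j :=
  expected_number_connected_subsets_general c hc k hk n hn j

end
end

section
/- (Lagrange inversion formula.) Let G be a formal power series over a commutative ℚ-algebra (e.g. over ℝ), and let f be a formal power series with zero constant term satisfying f(x) = x·G(f(x)). Then for all integers n ≥ k ≥ 1, n·[x^n] f(x)^k = k·[x^{n−k}] G(x)^n, where [x^m] F denotes the coefficient of x^m in the power series F. -/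
/-! Put `W = G(f)`, so that `f = X W` and `[x^{m+k}] f^k = [x^m] W^k = [x^m] G^k(f)`, because
composition with `f` is Mathlib's ring homomorphism `PowerSeries.subst`. Expanding `G^k(f)` and
applying the formula inductively to each `m [x^m] f^j` with `j ≤ m` gives
`m [x^m] W^k = [x^m] (X (G^k)' G^m)`. Since `(m + k) (G^k)' G^m = k (G^{m+k})'`, this yields
`(m + k) m [x^m] W^k = k m [x^m] G^{m+k}`, and `m` is invertible in a `ℚ`-algebra. -/

open scoped Classical

noncomputable section

/-- Composition (substitution) `G(f)` of formal power series, valid when `f` has zero constant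
term: the coefficient of `x^r` in `G(f)` is `Σ_{j=0}^{r} ([x^j]G) · [x^r](f^j)` (higher powers of
`f` contribute nothing to the coefficient of `x^r` since `f` has zero constant term). -/
def psComp {R : Type*} [CommSemiring R] (G f : PowerSeries R) : PowerSeries R :=
  PowerSeries.mk fun r =>
    ∑ j ∈ Finset.range (r + 1), PowerSeries.coeff j G * PowerSeries.coeff r (f ^ j)

theorem IsUnit.natCast_of_algebra (K : Type*) {A : Type*} [Semifield K] [CharZero K]
    [Semiring A] [Algebra K A] {n : ℕ} (hn : n ≠ 0) : IsUnit (n : A) := by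
  simpa using (isUnit_iff_ne_zero.mpr (Nat.cast_ne_zero.mpr hn : (n : K) ≠ 0)).map
    (algebraMap K A)

namespace PowerSeries

open Finset

section CommSemiring

variable {R : Type*} [CommSemiring R]

theorem coeff_pow_eq_zero_of_lt {f : R⟦X⟧} (hf : constantCoeff f = 0) {r j : ℕ} (h : r < j) :
    coeff r (f ^ j) = 0 :=
  X_pow_dvd_iff.mp (pow_dvd_pow_of_dvd (X_dvd_iff.mpr hf) j) r h

theorem coeff_X_mul_derivative (H : R⟦X⟧) (n : ℕ) :
    coeff n (X * d⁄dX R H) = n * coeff n H := by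
  cases n with
  | zero => simp
  | succ n => rw [coeff_succ_X_mul, coeff_derivative, mul_comm, Nat.cast_succ]

theorem add_nsmul_derivative_pow_mul_pow (G : R⟦X⟧) (m k : ℕ) :
    (m + k) • (d⁄dX R (G ^ k) * G ^ m) = k • d⁄dX R (G ^ (m + k)) := by
  cases k with
  | zero => simp
  | succ k =>
    rw [Derivation.leibniz_pow, Derivation.leibniz_pow, add_tsub_cancel_right,
      show m + (k + 1) - 1 = k + m by omega, pow_add]
    simp only [smul_eq_mul, nsmul_eq_mul]
    ring

theorem natCast_add_mul_coeff_X_mul_derivative_pow_mul_pow (G : R⟦X⟧) (m k : ℕ) :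
    ((m + k : ℕ) : R) * coeff m (X * d⁄dX R (G ^ k) * G ^ m) =
      k * (m * coeff m (G ^ (m + k))) := by
  have h := congrArg (fun φ => coeff m (X * φ)) (add_nsmul_derivative_pow_mul_pow G m k)
  rwa [mul_smul_comm, mul_smul_comm, map_nsmul, map_nsmul, nsmul_eq_mul, nsmul_eq_mul,
    ← mul_assoc, coeff_X_mul_derivative] at h

theorem natCast_mul_coeff_psComp {f H K : R⟦X⟧} {m : ℕ}
    (hfK : ∀ j ≤ m, (m : R) * coeff m (f ^ j) = j * coeff (m - j) K) :
    (m : R) * coeff m (psComp H f) = coeff m (X * d⁄dX R H * K) := by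
  rw [psComp, coeff_mk, mul_sum, coeff_mul, Nat.sum_antidiagonal_eq_sum_range_succ_mk]
  refine sum_congr rfl fun j hj => ?_
  rw [coeff_X_mul_derivative, mul_left_comm, hfK j (Nat.lt_succ_iff.mp (mem_range.mp hj))]
  ring

end CommSemiring

variable {R : Type*} [CommRing R]

theorem psComp_eq_subst {f : R⟦X⟧} (hf : constantCoeff f = 0) (G : R⟦X⟧) :
    psComp G f = G.subst f := by
  ext r
  rw [coeff_subst' (HasSubst.of_constantCoeff_zero' hf), psComp, coeff_mk,
    finsum_eq_sum_of_support_subset _ (s := range (r + 1))]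
  · simp only [smul_eq_mul]
  · refine Function.support_subset_iff'.mpr fun j hj => ?_
    rw [coeff_pow_eq_zero_of_lt hf (by simpa using hj), smul_zero]

theorem psComp_pow {f : R⟦X⟧} (hf : constantCoeff f = 0) (G : R⟦X⟧) (k : ℕ) :
    psComp (G ^ k) f = psComp G f ^ k := by
  rw [psComp_eq_subst hf, psComp_eq_subst hf, subst_pow (HasSubst.of_constantCoeff_zero' hf)]

theorem natCast_add_mul_coeff_add_pow [Algebra ℚ R] {G f : R⟦X⟧} (hf : constantCoeff f = 0)
    (hfG : f = X * psComp G f) (m k : ℕ) :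
    ((m + k : ℕ) : R) * coeff (m + k) (f ^ k) = k * coeff m (G ^ (m + k)) := by
  induction m using Nat.strong_induction_on generalizing k with | _ m ih =>
  have hshift : coeff (m + k) (f ^ k) = coeff m (psComp (G ^ k) f) := by
    rw [psComp_pow hf, ← coeff_X_pow_mul _ k m, ← mul_pow, ← hfG]
  rcases m.eq_zero_or_pos with rfl | hm
  · rw [zero_add] at hshift ⊢
    simp [hshift, psComp]
  have hfK : ∀ j ≤ m, (m : R) * coeff m (f ^ j) = j * coeff (m - j) (G ^ m) := by
    intro j hj
    rcases j.eq_zero_or_pos with rfl | hj0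
    · simp [coeff_one, hm.ne']
    · simpa only [Nat.sub_add_cancel hj] using ih (m - j) (by omega) j
  apply (IsUnit.natCast_of_algebra ℚ hm.ne').mul_left_cancel
  calc (m : R) * (((m + k : ℕ) : R) * coeff (m + k) (f ^ k))
      = ((m + k : ℕ) : R) * coeff m (X * d⁄dX R (G ^ k) * G ^ m) := by
        rw [hshift, ← natCast_mul_coeff_psComp hfK]; ring
    _ = k * (m * coeff m (G ^ (m + k))) :=
        natCast_add_mul_coeff_X_mul_derivative_pow_mul_pow G m k
    _ = m * (k * coeff m (G ^ (m + k))) := by ring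

end PowerSeries

/-- **Lagrange inversion formula.** If `G` is a formal power series over a commutative
`ℚ`-algebra and `f` is a formal power series with zero constant term satisfying
`f(x) = x·G(f(x))`, then for all integers `n ≥ k ≥ 1`,
`n·[x^n] f(x)^k = k·[x^{n−k}] G(x)^n`. -/
theorem lagrange_inversion (R : Type) [CommRing R] [Algebra ℚ R]
    (G f : PowerSeries R) (hf0 : PowerSeries.constantCoeff f = 0)
    (hfG : f = PowerSeries.X * psComp G f) :
    ∀ n k : ℕ, 1 ≤ k → k ≤ n →
      (n : R) * PowerSeries.coeff n (f ^ k) =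
        (k : R) * PowerSeries.coeff (n - k) (G ^ n) := by
  intro n k _ hkn
  obtain ⟨m, rfl⟩ := Nat.exists_eq_add_of_le' hkn
  rw [Nat.add_sub_cancel]
  exact PowerSeries.natCast_add_mul_coeff_add_pow hf0 hfG m k

end
end
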